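/- Let E be a Hausdorff locally convex topological vector space over ℂ equipped with an increasing sequence (B_N)_{N∈ℕ} of closed, absolutely convex, bounded subsets that is fundamental, and let (Z_n)_{n∈ℕ} be an inductive spectrum of Banach spaces. If the pair (E,(Z_n)) satisfies condition (WS) and (Z_n) satisfies condition (Q), then (E,(Z_n)) satisfies condition (S). -/

import Mathlib

open Pointwise

/-- Condition (Q) for an inductive spectrum of Banach spaces `(Z n)` with composite
inclusion maps `j n m h : Z n →L[ℂ] Z m` for `h : n ≤ m`. -/
def SpectrumCondQ {Z : ℕ → Type*} [∀ n, NormedAddCommGroup (Z n)]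
    [∀ n, NormedSpace ℂ (Z n)]
    (j : ∀ n m : ℕ, n ≤ m → (Z n →L[ℂ] Z m)) : Prop :=
  ∀ n : ℕ, ∃ m : ℕ, ∃ hnm : n ≤ m, ∀ k : ℕ, ∀ hmk : m ≤ k, ∀ ε : ℝ, 0 < ε →
    ∃ C : ℝ, 0 < C ∧ ∀ z : Z n,
      ‖j n m hnm z‖ ≤ C * ‖j n k (hnm.trans hmk) z‖ + ε * ‖z‖

/-- Condition (S) for a pair `(E, (Z n))`, with respect to a fundamental increasing
sequence of bounded sets `B` in `E`. -/
def PairCondS {E : Type*} [AddCommGroup E] [Module ℂ E] (B : ℕ → Set E)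
    {Z : ℕ → Type*} [∀ n, NormedAddCommGroup (Z n)] [∀ n, NormedSpace ℂ (Z n)]
    (j : ∀ n m : ℕ, n ≤ m → (Z n →L[ℂ] Z m)) : Prop :=
  ∀ n : ℕ, ∃ m : ℕ, ∃ hnm : n ≤ m, ∀ k : ℕ, ∀ hmk : m ≤ k, ∃ N : ℕ,
    ∀ M : ℕ, N ≤ M → ∀ ε : ℝ, 0 < ε → ∃ K : ℕ, M ≤ K ∧ ∃ C : ℝ, 0 < C ∧
      ∀ z : Z n,
        ‖j n m hnm z‖ • B M ⊆
          (C * ‖j n k (hnm.trans hmk) z‖) • B K + (ε * ‖z‖) • B N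

/-- Condition (WS) for a pair `(E, (Z n))`, with respect to a fundamental increasing
sequence of bounded sets `B` in `E`. -/
def PairCondWS {E : Type*} [AddCommGroup E] [Module ℂ E] (B : ℕ → Set E)
    {Z : ℕ → Type*} [∀ n, NormedAddCommGroup (Z n)] [∀ n, NormedSpace ℂ (Z n)]
    (j : ∀ n m : ℕ, n ≤ m → (Z n →L[ℂ] Z m)) : Prop :=
  ∀ n : ℕ, ∃ m : ℕ, ∃ hnm : n ≤ m, ∀ k : ℕ, ∀ hmk : m ≤ k, ∃ N : ℕ,
    ∀ M : ℕ, N ≤ M → ∃ K : ℕ, M ≤ K ∧ ∃ C : ℝ, 0 < C ∧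
      ∀ z : Z n,
        ‖j n m hnm z‖ • B M ⊆
          C • (‖j n k (hnm.trans hmk) z‖ • B K + ‖z‖ • B N)


open Pointwise in
private lemma bal_smul_mono {E : Type*} [AddCommGroup E] [Module ℂ E] {s : Set E}
    (hs : Balanced ℂ s) {a b : ℝ} (ha : 0 ≤ a) (hab : a ≤ b) : a • s ⊆ b • s := by
  have h1 : ((a : ℂ)) • s = a • s := by
    ext x
    simp only [Set.mem_smul_set]
    constructor
    · rintro ⟨y, hy, rfl⟩; exact ⟨y, hy, by rw [← smul_one_smul ℂ a y, Complex.real_smul, mul_one]⟩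
    · rintro ⟨y, hy, rfl⟩; exact ⟨y, hy, by rw [← smul_one_smul ℂ a y, Complex.real_smul, mul_one]⟩
  rw [← h1]
  exact hs.smul_mono (a := (a : ℂ)) (b := b)
    (by rw [Complex.norm_real, Real.norm_eq_abs, Real.norm_eq_abs, abs_of_nonneg ha,
      abs_of_nonneg (ha.trans hab)]; exact hab)

/-- If (E, (Z n)) satisfies (WS) and (Z n) satisfies (Q), then (E, (Z n))
satisfies (S). -/
theorem stmt12 {E : Type*} [AddCommGroup E] [Module ℂ E] [TopologicalSpace E]
    [IsTopologicalAddGroup E] [ContinuousSMul ℂ E] [LocallyConvexSpace ℝ E] [T2Space E]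
    (B : ℕ → Set E)
    (hBclosed : ∀ N, IsClosed (B N))
    (hBconvex : ∀ N, Convex ℝ (B N))
    (hBbalanced : ∀ N, Balanced ℂ (B N))
    (hBbounded : ∀ N, Bornology.IsVonNBounded ℂ (B N))
    (hBmono : Monotone B)
    (hBfund : ∀ S : Set E, Bornology.IsVonNBounded ℂ S → ∃ N, S ⊆ B N)
    {Z : ℕ → Type*} [∀ n, NormedAddCommGroup (Z n)] [∀ n, NormedSpace ℂ (Z n)]
    [∀ n, CompleteSpace (Z n)]
    (j : ∀ n m : ℕ, n ≤ m → (Z n →L[ℂ] Z m))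
    (hj_id : ∀ n, j n n le_rfl = ContinuousLinearMap.id ℂ (Z n))
    (hj_comp : ∀ n m k (hnm : n ≤ m) (hmk : m ≤ k) (z : Z n),
      j m k hmk (j n m hnm z) = j n k (hnm.trans hmk) z)
    (hj_inj : ∀ n m (hnm : n ≤ m), Function.Injective (j n m hnm)) :
    PairCondWS B j → SpectrumCondQ j → PairCondS B j := by
  intro hWS hQ n
  obtain ⟨m₀, hnm₀, hQm⟩ := hQ n
  obtain ⟨m, hm₀m, hWSm⟩ := hWS m₀
  refine ⟨m, hnm₀.trans hm₀m, ?_⟩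
  intro k hmk
  obtain ⟨N, hN⟩ := hWSm k hmk
  refine ⟨N, ?_⟩
  intro M hNM ε hε
  obtain ⟨K, hMK, C, hC, hsub⟩ := hN M hNM
  obtain ⟨C', hC', hq⟩ := hQm k (hm₀m.trans hmk) (ε / C) (div_pos hε hC)
  refine ⟨K, hMK, C * (1 + C'), by positivity, ?_⟩
  intro z
  set w := j n m₀ hnm₀ z with hw
  have hcm : j m₀ m hm₀m w = j n m (hnm₀.trans hm₀m) z := hj_comp n m₀ m hnm₀ hm₀m z
  have hck : j m₀ k (hm₀m.trans hmk) w = j n k ((hnm₀.trans hm₀m).trans hmk) z :=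
    hj_comp n m₀ k hnm₀ (hm₀m.trans hmk) z
  have hsub' := hsub w
  rw [hcm, hck] at hsub'
  intro e he
  have he' := hsub' he
  obtain ⟨x, hx, rfl⟩ := he'
  obtain ⟨a, ha, b, hb, rfl⟩ := hx
  have hqz := hq z
  rw [← hw] at hqz
  set zk := ‖j n k ((hnm₀.trans hm₀m).trans hmk) z‖ with hzk
  have hzk0 : 0 ≤ zk := norm_nonneg _
  have hz0 : (0:ℝ) ≤ ‖z‖ := norm_nonneg _
  -- C • b ∈ (C * ‖w‖) • B N ⊆ (C*C'*zk + ε*‖z‖) • B N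
  have hCb : C • b ∈ (C * C' * zk + ε * ‖z‖) • B N := by
    obtain ⟨y, hy, rfl⟩ := hb
    have h1 : C • ‖w‖ • y = (C * ‖w‖) • y := (mul_smul C ‖w‖ y).symm
    have hmem : (C * ‖w‖) • y ∈ (C * ‖w‖) • B N := Set.smul_mem_smul_set hy
    have hle : C * ‖w‖ ≤ C * C' * zk + ε * ‖z‖ := by
      calc C * ‖w‖ ≤ C * (C' * zk + (ε / C) * ‖z‖) := by
            exact mul_le_mul_of_nonneg_left hqz hC.le
        _ = C * C' * zk + ε * ‖z‖ := by field_simp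
    rw [h1]
    exact bal_smul_mono (hBbalanced N) (by positivity) hle hmem
  rw [(hBconvex N).add_smul (by positivity) (by positivity)] at hCb
  obtain ⟨u, hu, v, hv, huv⟩ := hCb
  have hu' : u ∈ (C * C' * zk) • B K :=
    Set.smul_set_mono (hBmono (hNM.trans hMK)) hu
  have hCa : C • a ∈ (C * zk) • B K := by
    obtain ⟨y, hy, rfl⟩ := ha
    rw [smul_smul]
    exact Set.smul_mem_smul_set hy
  have hsum : C • a + u ∈ (C * (1 + C') * zk) • B K := by
    have : C * (1 + C') * zk = C * zk + C * C' * zk := by ring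
    rw [this, (hBconvex K).add_smul (by positivity) (by positivity)]
    exact ⟨C • a, hCa, u, hu', rfl⟩
  refine ⟨C • a + u, hsum, v, hv, ?_⟩
  show (C • a + u) + v = C • (a + b)
  rw [add_assoc]
  show C • a + (u + v) = C • (a + b)
  rw [show u + v = C • b from huv, smul_add]
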